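/- arXiv:2602.05311 — 4 statements merged into one kernel-verified Lean document; each statement's English description precedes it below -/
import Mathlib

section
/- Suppose the robust CLBF conditions (C0)–(C3) hold. Then every δ-perturbed trajectory x : ℕ → X reaches the goal set in finite time while avoiding the unsafe set: there exists τ : ℕ such that x(τ) ∈ G and for every t ≤ τ, x(t) ∉ U. -/
/-- **Robust RWA guarantee.** Under the robust CLBF conditions (C0)–(C3), every
δ-perturbed trajectory reaches the goal set `G` in finite time while avoiding
the unsafe set `U`. -/
theorem robust_rwa_guarantee
    {X : Type*} [MetricSpace X]
    (g : X → X) (V : X → ℝ)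
    (I G U : Set X)
    (c α β ε δ : ℝ)
    (hαβ : α > β) (hβc : β > c) (hε : ε > 0) (hδ : δ ≥ 0)
    -- (C0): V is bounded below by c
    (hC0 : ∀ z : X, V z ≥ c)
    -- (C1): V ≤ β on the initial set
    (hC1 : ∀ y ∈ I, V y ≤ β)
    -- (C2): robust decrease condition
    (hC2 : ∀ z : X, z ∉ G → V z ≤ β →
      ∀ y : X, dist y (g z) ≤ δ → V z - V y ≥ ε)
    -- (C3): V ≥ α on the unsafe set
    (hC3 : ∀ u ∈ U, V u ≥ α)
    -- δ-perturbed trajectory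
    (x : ℕ → X) (hx0 : x 0 ∈ I)
    (hxstep : ∀ t : ℕ, dist (x (t + 1)) (g (x t)) ≤ δ) :
    ∃ τ : ℕ, x τ ∈ G ∧ ∀ t ≤ τ, x t ∉ U := by
  have key : ∀ n : ℕ, (∀ t < n, x t ∉ G) → V (x n) ≤ β - n * ε := by
    intro n
    induction n with
    | zero => intro _; simpa using hC1 _ hx0
    | succ n ih =>
      intro h
      have hVn : V (x n) ≤ β - n * ε := ih fun t ht => h t (ht.trans (Nat.lt_succ_self n))
      have hnε : (0:ℝ) ≤ n * ε := by positivity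
      have hGn : x n ∉ G := h n (Nat.lt_succ_self n)
      have := hC2 (x n) hGn (by linarith) (x (n+1)) (hxstep n)
      push_cast
      linarith
  have hG : ∃ n, x n ∈ G := by
    by_contra h
    push_neg at h
    obtain ⟨n, hn⟩ := exists_nat_gt ((β - c) / ε)
    have h1 := key n (fun t _ => h t)
    have h2 := hC0 (x n)
    have h3 : β - c < n * ε := (div_lt_iff₀ hε).mp hn
    linarith
  classical
  refine ⟨Nat.find hG, Nat.find_spec hG, fun t ht hU => ?_⟩
  have h1 : V (x t) ≤ β - t * ε := key t fun s hs =>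
    Nat.find_min hG (lt_of_lt_of_le hs ht)
  have h2 := hC3 _ hU
  have hnε : (0:ℝ) ≤ t * ε := by positivity
  linarith
end

section
/- Suppose the robust CLBF conditions (C0)–(C3) hold and x : ℕ → X is a δ-perturbed trajectory. If t : ℕ is such that x(s) ∉ G for all s ≤ t, then (t : ℝ) · ε ≤ β − c. In particular the first time τ at which the trajectory enters the goal set G satisfies τ ≤ (β − c)/ε + 1. -/
/-- **Quantitative finite-time reachability.** Under the robust CLBF conditions
(C0)–(C3), along any δ-perturbed trajectory: if the goal has not been visited up
to (and including) time `t`, then `t·ε ≤ β − c`; in particular the first hitting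
time `τ` of the goal set satisfies `τ ≤ (β − c)/ε + 1`. -/
theorem robust_rwa_time_bound
    {X : Type*} [MetricSpace X]
    (g : X → X) (V : X → ℝ)
    (I G U : Set X)
    (c α β ε δ : ℝ)
    (hαβ : α > β) (hβc : β > c) (hε : ε > 0) (hδ : δ ≥ 0)
    -- (C0): V is bounded below by c
    (hC0 : ∀ z : X, V z ≥ c)
    -- (C1): V ≤ β on the initial set
    (hC1 : ∀ y ∈ I, V y ≤ β)
    -- (C2): robust decrease condition
    (hC2 : ∀ z : X, z ∉ G → V z ≤ β →
      ∀ y : X, dist y (g z) ≤ δ → V z - V y ≥ ε)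
    -- (C3): V ≥ α on the unsafe set
    (hC3 : ∀ u ∈ U, V u ≥ α)
    -- δ-perturbed trajectory
    (x : ℕ → X) (hx0 : x 0 ∈ I)
    (hxstep : ∀ t : ℕ, dist (x (t + 1)) (g (x t)) ≤ δ) :
    (∀ t : ℕ, (∀ s ≤ t, x s ∉ G) → (t : ℝ) * ε ≤ β - c) ∧
    (∀ τ : ℕ, x τ ∈ G → (∀ s < τ, x s ∉ G) → (τ : ℝ) ≤ (β - c) / ε + 1) := by

  have key : ∀ t : ℕ, (∀ s ≤ t, x s ∉ G) → V (x t) ≤ β - (t : ℝ) * ε := by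
    intro t
    induction t with
    | zero => intro _; simpa using hC1 _ hx0
    | succ n ih =>
      intro h
      have hprev : V (x n) ≤ β - (n : ℝ) * ε := ih (fun s hs => h s (le_trans hs (Nat.le_succ n)))
      have hβn : V (x n) ≤ β := by nlinarith [Nat.cast_nonneg (α := ℝ) n]
      have hdec := hC2 (x n) (h n (Nat.le_succ n)) hβn (x (n+1)) (hxstep n)
      push_cast
      linarith
  have part1 : ∀ t : ℕ, (∀ s ≤ t, x s ∉ G) → (t : ℝ) * ε ≤ β - c := by
    intro t ht
    have := key t ht
    have := hC0 (x t)
    linarith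
  refine ⟨part1, ?_⟩
  intro τ hτ hτ'
  cases τ with
  | zero =>
    have : (0:ℝ) ≤ (β - c) / ε := div_nonneg (by linarith) hε.le
    simpa using by linarith
  | succ n =>
    have hn : (n : ℝ) * ε ≤ β - c := part1 n (fun s hs => hτ' s (Nat.lt_succ_of_le hs))
    have : (n : ℝ) ≤ (β - c) / ε := (le_div_iff₀ hε).2 hn
    push_cast
    linarith
end

section
/- Suppose the robust CLBF conditions (C0)–(C3) hold and x : ℕ → X is a δ-perturbed trajectory. If τ : ℕ is such that x(t) ∉ G for all t < τ, then for every t ≤ τ one has V(x(t)) ≤ β and V(x(t)) < α, and hence x(t) ∉ U for all t ≤ τ. -/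
/-- **Safety along the trajectory.** Under the robust CLBF conditions (C0)–(C3),
along any δ-perturbed trajectory: if the goal set has not been entered strictly
before time `τ`, then for every `t ≤ τ` we have `V(x t) ≤ β`, `V(x t) < α`, and
hence `x t ∉ U`. -/
theorem robust_rwa_safety
    {X : Type*} [MetricSpace X]
    (g : X → X) (V : X → ℝ)
    (I G U : Set X)
    (c α β ε δ : ℝ)
    (hαβ : α > β) (hβc : β > c) (hε : ε > 0) (hδ : δ ≥ 0)
    -- (C0): V is bounded below by c
    (hC0 : ∀ z : X, V z ≥ c)
    -- (C1): V ≤ β on the initial set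
    (hC1 : ∀ y ∈ I, V y ≤ β)
    -- (C2): robust decrease condition
    (hC2 : ∀ z : X, z ∉ G → V z ≤ β →
      ∀ y : X, dist y (g z) ≤ δ → V z - V y ≥ ε)
    -- (C3): V ≥ α on the unsafe set
    (hC3 : ∀ u ∈ U, V u ≥ α)
    -- δ-perturbed trajectory
    (x : ℕ → X) (hx0 : x 0 ∈ I)
    (hxstep : ∀ t : ℕ, dist (x (t + 1)) (g (x t)) ≤ δ)
    (τ : ℕ) (hτ : ∀ t < τ, x t ∉ G) :
    ∀ t ≤ τ, V (x t) ≤ β ∧ V (x t) < α ∧ x t ∉ U := by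
  have key : ∀ t ≤ τ, V (x t) ≤ β := by
    intro t
    induction t with
    | zero => intro _; exact hC1 _ hx0
    | succ n ih =>
      intro hle
      have hn : n ≤ τ := Nat.le_of_succ_le hle
      have hVn := ih hn
      have hG : x n ∉ G := hτ n (Nat.lt_of_succ_le hle)
      have := hC2 (x n) hG hVn (x (n+1)) (hxstep n)
      linarith
  intro t ht
  have hβ' := key t ht
  have hα : V (x t) < α := lt_of_le_of_lt hβ' hαβ
  exact ⟨hβ', hα, fun hU => absurd (hC3 _ hU) (not_le.mpr hα)⟩
end

section
/- Suppose the robust CLBF conditions (C0)–(C3) hold and x : ℕ → X is a δ-perturbed trajectory. If t : ℕ is such that x(s) ∉ G for all s < t, then V(x(t)) ≤ β − (t : ℝ) · ε. -/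
/-- **Linear descent of the certificate.** Under the robust CLBF conditions
(C0)–(C3), along any δ-perturbed trajectory: if the goal set has not been
entered strictly before time `t`, then `V(x t) ≤ β − t·ε`. -/
theorem robust_rwa_descent
    {X : Type*} [MetricSpace X]
    (g : X → X) (V : X → ℝ)
    (I G U : Set X)
    (c α β ε δ : ℝ)
    (hαβ : α > β) (hβc : β > c) (hε : ε > 0) (hδ : δ ≥ 0)
    -- (C0): V is bounded below by c
    (hC0 : ∀ z : X, V z ≥ c)
    -- (C1): V ≤ β on the initial set
    (hC1 : ∀ y ∈ I, V y ≤ β)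
    -- (C2): robust decrease condition
    (hC2 : ∀ z : X, z ∉ G → V z ≤ β →
      ∀ y : X, dist y (g z) ≤ δ → V z - V y ≥ ε)
    -- (C3): V ≥ α on the unsafe set
    (hC3 : ∀ u ∈ U, V u ≥ α)
    -- δ-perturbed trajectory
    (x : ℕ → X) (hx0 : x 0 ∈ I)
    (hxstep : ∀ t : ℕ, dist (x (t + 1)) (g (x t)) ≤ δ)
    (t : ℕ) (ht : ∀ s < t, x s ∉ G) :
    V (x t) ≤ β - (t : ℝ) * ε := by
  induction t with
  | zero => simpa using hC1 _ hx0
  | succ n ih =>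
    have ihn := ih (fun s hs => ht s (hs.trans (Nat.lt_succ_self n)))
    have hVn : V (x n) ≤ β := ihn.trans (by nlinarith [Nat.cast_nonneg (α := ℝ) n])
    have h2 := hC2 (x n) (ht n (Nat.lt_succ_self n)) hVn (x (n + 1)) (hxstep n)
    push_cast
    linarith
end
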